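/- arXiv:quant-ph/0611286 — 5 statements merged into one kernel-verified Lean document; each statement's English description precedes it below -/
import Mathlib

section
/- Let ρ be a Borel probability measure on ℝ and let r > 0. If the essential supremum (with respect to Lebesgue measure) of x ↦ ρ((x - r/2, x + r/2)) equals 1, then the diameter of the support of ρ is at most r. -/
open MeasureTheory

/-- The topological support of a Borel measure on `ℝ`: the set of points all of whose
open neighbourhoods have positive measure. -/
def msupp (μ : Measure ℝ) : Set ℝ :=
  {x | ∀ ε > (0 : ℝ), 0 < μ (Set.Ioo (x - ε) (x + ε))}

/-- If the essential supremum (w.r.t. Lebesgue measure) of `x ↦ ρ((x - r/2, x + r/2))`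
equals 1, then the diameter of the support of `ρ` is at most `r`. -/
theorem diam_support_le_of_essSup_eq_one (ρ : Measure ℝ) [IsProbabilityMeasure ρ]
    (r : ℝ) (hr : 0 < r)
    (h : essSup (fun x => ρ (Set.Ioo (x - r / 2) (x + r / 2))) volume = 1) :
    EMetric.diam (msupp ρ) ≤ ENNReal.ofReal r := by
  apply EMetric.diam_le
  intro p hp q hq
  rw [edist_dist]
  apply ENNReal.ofReal_le_ofReal
  by_contra hlt
  push_neg at hlt
  -- set a = min, b = max
  set a := min p q with ha'
  set b := max p q with hb'
  have hab : r < b - a := by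
    rcases le_total p q with hpq | hpq
    · rw [ha', hb', min_eq_left hpq, max_eq_right hpq]
      have : dist p q = q - p := by rw [Real.dist_eq, abs_of_nonpos (by linarith)]; ring
      linarith [this ▸ hlt]
    · rw [ha', hb', min_eq_right hpq, max_eq_left hpq]
      have : dist p q = p - q := by rw [Real.dist_eq, abs_of_nonneg (by linarith)]
      linarith [this ▸ hlt]
  have ha : a ∈ msupp ρ := by
    rcases le_total p q with hpq | hpq
    · rwa [ha', min_eq_left hpq]
    · rwa [ha', min_eq_right hpq]
  have hb : b ∈ msupp ρ := by
    rcases le_total p q with hpq | hpq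
    · rwa [hb', max_eq_right hpq]
    · rwa [hb', max_eq_left hpq]
  set ε := (b - a - r) / 2 with hε'
  have hε : 0 < ε := by rw [hε']; linarith
  have hJa : 0 < ρ (Set.Ioo (a - ε) (a + ε)) := ha ε hε
  have hJb : 0 < ρ (Set.Ioo (b - ε) (b + ε)) := hb ε hε
  set m := min (ρ (Set.Ioo (a - ε) (a + ε))) (ρ (Set.Ioo (b - ε) (b + ε))) with hm'
  have hm0 : 0 < m := lt_min hJa hJb
  have hm1 : m ≤ 1 := le_trans (min_le_left _ _) (by
    simpa using measure_mono (μ := ρ) (Set.subset_univ (Set.Ioo (a - ε) (a + ε))))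
  have key : ∀ x : ℝ, ρ (Set.Ioo (x - r / 2) (x + r / 2)) ≤ 1 - m := by
    intro x
    have hdisj : Disjoint (Set.Ioo (x - r / 2) (x + r / 2)) (Set.Ioo (a - ε) (a + ε)) ∨
        Disjoint (Set.Ioo (x - r / 2) (x + r / 2)) (Set.Ioo (b - ε) (b + ε)) := by
      by_cases hc : x + r / 2 ≤ b - ε
      · right
        exact Set.disjoint_left.mpr fun y hy hy' => by
          simp only [Set.mem_Ioo] at hy hy'; linarith
      · left
        push_neg at hc
        have : a + ε ≤ x - r / 2 := by
          by_contra hc2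
          push_neg at hc2
          have : b - a - 2 * ε < r := by linarith
          rw [hε'] at this; linarith
        exact Set.disjoint_left.mpr fun y hy hy' => by
          simp only [Set.mem_Ioo] at hy hy'; linarith
    rcases hdisj with hd | hd
    · have hsum : ρ (Set.Ioo (x - r / 2) (x + r / 2)) + m ≤ 1 := by
        calc ρ (Set.Ioo (x - r / 2) (x + r / 2)) + m
            ≤ ρ (Set.Ioo (x - r / 2) (x + r / 2)) + ρ (Set.Ioo (a - ε) (a + ε)) :=
              add_le_add_right (min_le_left _ _) _
          _ = ρ (Set.Ioo (x - r / 2) (x + r / 2) ∪ Set.Ioo (a - ε) (a + ε)) :=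
              (measure_union hd measurableSet_Ioo).symm
          _ ≤ ρ Set.univ := measure_mono (Set.subset_univ _)
          _ = 1 := measure_univ
      exact ENNReal.le_sub_of_add_le_right (by exact ne_top_of_le_ne_top ENNReal.one_ne_top hm1) hsum
    · have hsum : ρ (Set.Ioo (x - r / 2) (x + r / 2)) + m ≤ 1 := by
        calc ρ (Set.Ioo (x - r / 2) (x + r / 2)) + m
            ≤ ρ (Set.Ioo (x - r / 2) (x + r / 2)) + ρ (Set.Ioo (b - ε) (b + ε)) :=
              add_le_add_right (min_le_right _ _) _
          _ = ρ (Set.Ioo (x - r / 2) (x + r / 2) ∪ Set.Ioo (b - ε) (b + ε)) :=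
              (measure_union hd measurableSet_Ioo).symm
          _ ≤ ρ Set.univ := measure_mono (Set.subset_univ _)
          _ = 1 := measure_univ
      exact ENNReal.le_sub_of_add_le_right (by exact ne_top_of_le_ne_top ENNReal.one_ne_top hm1) hsum
  have hess : essSup (fun x => ρ (Set.Ioo (x - r / 2) (x + r / 2))) volume ≤ 1 - m :=
    essSup_le_of_ae_le _ (Filter.Eventually.of_forall key)
  rw [h] at hess
  have : (1 : ENNReal) - m < 1 :=
    ENNReal.sub_lt_self ENNReal.one_ne_top one_ne_zero hm0.ne'
  exact absurd hess (not_le.mpr this)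
end

section
/- Let ρ be a Borel probability measure on ℝ and 1/2 ≤ c < 1. If for every r > 0 the essential supremum over x ∈ ℝ (with respect to Lebesgue measure) of ρ((x-r/2, x+r/2)) is strictly greater than c, then there exist a point x̄ ∈ ℝ and a Borel probability measure λ on ℝ with x̄ ∈ supp λ such that ρ = c·δ_{x̄} + (1-c)·λ. -/
open MeasureTheory

/-- If for every `r > 0` the essential supremum of `x ↦ ρ((x - r/2, x + r/2))` is
strictly greater than `c` (`1/2 ≤ c < 1`), then `ρ = c·δ_x̄ + (1-c)·λ` for some point
`x̄` and some probability measure `λ` with `x̄ ∈ supp λ`. -/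
theorem decomposition_of_essSup_gt (ρ : Measure ℝ) [IsProbabilityMeasure ρ]
    (c : ℝ) (hc : 1 / 2 ≤ c) (hc1 : c < 1)
    (h : ∀ r > (0 : ℝ),
      ENNReal.ofReal c < essSup (fun x => ρ (Set.Ioo (x - r / 2) (x + r / 2))) volume) :
    ∃ (xbar : ℝ) (lam : Measure ℝ), IsProbabilityMeasure lam ∧ xbar ∈ msupp lam ∧
      ρ = ENNReal.ofReal c • Measure.dirac xbar + ENNReal.ofReal (1 - c) • lam := by
  set r : ℕ → ℝ := fun n => 1 / (n + 1) with hr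
  have hrpos : ∀ n : ℕ, 0 < r n := fun n => by positivity
  have hranti : ∀ n m : ℕ, n ≤ m → r m ≤ r n := by
    intro n m hnm
    apply one_div_le_one_div_of_le (by positivity)
    have : (n : ℝ) ≤ m := Nat.cast_le.mpr hnm
    linarith
  -- choose points with large interval mass
  have key : ∀ n : ℕ, ∃ y : ℝ,
      ENNReal.ofReal c < ρ (Set.Ioo (y - r n / 2) (y + r n / 2)) := by
    intro n
    by_contra hcon
    push_neg at hcon
    have h1 := h (r n) (hrpos n)
    exact absurd h1 (not_lt.mpr (essSup_le_of_ae_le _ (Filter.Eventually.of_forall hcon)))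
  choose x hx using key
  set I : ℕ → Set ℝ := fun n => Set.Ioo (x n - r n / 2) (x n + r n / 2) with hI
  -- intervals pairwise intersect
  have hinter : ∀ n m : ℕ, (I n ∩ I m).Nonempty := by
    intro n m
    rw [Set.nonempty_iff_ne_empty]
    intro hemp
    have hdisj : Disjoint (I n) (I m) := Set.disjoint_iff_inter_eq_empty.mpr hemp
    have h1 : ρ (I n ∪ I m) = ρ (I n) + ρ (I m) := measure_union hdisj measurableSet_Ioo
    have h2 : ρ (I n ∪ I m) ≤ 1 := prob_le_one
    have h3 : (1 : ENNReal) ≤ ENNReal.ofReal c + ENNReal.ofReal c := by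
      rw [← ENNReal.ofReal_add (by linarith) (by linarith), ← ENNReal.ofReal_one]
      exact ENNReal.ofReal_le_ofReal (by linarith)
    have h4 : ENNReal.ofReal c + ENNReal.ofReal c < ρ (I n) + ρ (I m) :=
      ENNReal.add_lt_add (hx n) (hx m)
    rw [← h1] at h4
    exact absurd ((h3.trans_lt h4).trans_le h2) (lt_irrefl _)
  -- distance estimate
  have hdist : ∀ n m : ℕ, dist (x n) (x m) ≤ r n / 2 + r m / 2 := by
    intro n m
    obtain ⟨y, hyn, hym⟩ := hinter n m
    simp only [hI, Set.mem_Ioo] at hyn hym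
    rw [Real.dist_eq, abs_le]
    constructor <;> linarith [hyn.1, hyn.2, hym.1, hym.2]
  have hcauchy : CauchySeq x := by
    apply cauchySeq_of_le_tendsto_0 r
    · intro n m N hn hm
      calc dist (x n) (x m) ≤ r n / 2 + r m / 2 := hdist n m
        _ ≤ r N / 2 + r N / 2 := by linarith [hranti N n hn, hranti N m hm]
        _ = r N := by ring
    · exact tendsto_one_div_add_atTop_nhds_zero_nat
  obtain ⟨xbar, hlim⟩ := cauchySeq_tendsto_of_complete hcauchy
  -- key: every neighborhood of xbar has mass > c
  have hkey : ∀ ε > (0 : ℝ), ENNReal.ofReal c < ρ (Set.Ioo (xbar - ε) (xbar + ε)) := by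
    intro ε hε
    obtain ⟨N1, hN1⟩ := Metric.tendsto_atTop.mp hlim (ε / 4) (by positivity)
    obtain ⟨N2, hN2⟩ := exists_nat_one_div_lt (show (0:ℝ) < ε / 2 by positivity)
    set n := max N1 N2 with hn
    have hd : dist (x n) xbar < ε / 4 := hN1 n (le_max_left _ _)
    have hrn : r n < ε / 2 := by
      calc r n ≤ r N2 := hranti N2 n (le_max_right _ _)
        _ < ε / 2 := hN2
    have hsub : I n ⊆ Set.Ioo (xbar - ε) (xbar + ε) := by
      intro y hy
      simp only [hI, Set.mem_Ioo] at hy ⊢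
      rw [Real.dist_eq, abs_lt] at hd
      constructor <;> linarith [hy.1, hy.2, hd.1, hd.2]
    exact (hx n).trans_le (measure_mono hsub)
  -- the atom
  have hsing : {xbar} = ⋂ n : ℕ, Set.Ioo (xbar - r n) (xbar + r n) := by
    ext y
    simp only [Set.mem_singleton_iff, Set.mem_iInter, Set.mem_Ioo]
    constructor
    · rintro rfl n
      constructor <;> linarith [hrpos n]
    · intro hy
      by_contra hne
      have habs : 0 < |y - xbar| := abs_pos.mpr (sub_ne_zero.mpr hne)
      obtain ⟨n, hn⟩ := exists_nat_one_div_lt habs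
      have hyn := hy n
      have h1 : |y - xbar| < r n := abs_lt.mpr ⟨by linarith [hyn.1], by linarith [hyn.2]⟩
      exact absurd (hn.trans h1) (lt_irrefl _)
  have hatom : ENNReal.ofReal c ≤ ρ {xbar} := by
    have htend : Filter.Tendsto (fun n : ℕ => ρ (Set.Ioo (xbar - r n) (xbar + r n)))
        Filter.atTop (nhds (ρ (⋂ n : ℕ, Set.Ioo (xbar - r n) (xbar + r n)))) := by
      apply tendsto_measure_iInter_atTop
      · exact fun n => measurableSet_Ioo.nullMeasurableSet
      · intro n m hnm
        apply Set.Ioo_subset_Ioo <;> linarith [hranti n m hnm]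
      · exact ⟨0, measure_ne_top ρ _⟩
    rw [hsing]
    exact ge_of_tendsto' htend fun n => (hkey (r n) (hrpos n)).le
  -- the decomposition
  have hle : ENNReal.ofReal c • Measure.dirac xbar ≤ ρ := by
    rw [Measure.le_iff]
    intro s hs
    rw [Measure.smul_apply, Measure.dirac_apply' _ hs, smul_eq_mul]
    by_cases hxs : xbar ∈ s
    · rw [Set.indicator_of_mem hxs]
      simp only [Pi.one_apply, mul_one]
      exact hatom.trans (measure_mono (Set.singleton_subset_iff.mpr hxs))
    · rw [Set.indicator_of_notMem hxs]
      simp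
  haveI hfin : IsFiniteMeasure (ENNReal.ofReal c • Measure.dirac xbar) := by
    constructor
    rw [Measure.smul_apply, smul_eq_mul]
    simp only [measure_univ, mul_one]
    exact ENNReal.ofReal_lt_top
  set ν : Measure ℝ := ρ - ENNReal.ofReal c • Measure.dirac xbar with hν
  have hl0 : ENNReal.ofReal (1 - c) ≠ 0 := ne_of_gt (ENNReal.ofReal_pos.mpr (by linarith))
  have hltop : ENNReal.ofReal (1 - c) ≠ ⊤ := ENNReal.ofReal_ne_top
  have hνapp : ∀ s : Set ℝ, MeasurableSet s →
      ν s = ρ s - (ENNReal.ofReal c • Measure.dirac xbar) s := by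
    intro s hs
    exact Measure.sub_apply hs hle
  have hνuniv : ν Set.univ = ENNReal.ofReal (1 - c) := by
    rw [hνapp Set.univ MeasurableSet.univ, measure_univ, Measure.smul_apply, smul_eq_mul,
      measure_univ, mul_one, ENNReal.ofReal_sub _ (by linarith), ENNReal.ofReal_one]
  set lam : Measure ℝ := (ENNReal.ofReal (1 - c))⁻¹ • ν with hlam
  refine ⟨xbar, lam, ?_, ?_, ?_⟩
  · constructor
    rw [hlam, Measure.smul_apply, smul_eq_mul, hνuniv]
    exact ENNReal.inv_mul_cancel hl0 hltop
  · intro ε hε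
    rw [hlam, Measure.smul_apply, smul_eq_mul]
    apply ENNReal.mul_pos (ENNReal.inv_ne_zero.mpr hltop)
    rw [hνapp _ measurableSet_Ioo]
    have hmem : xbar ∈ Set.Ioo (xbar - ε) (xbar + ε) := by
      constructor <;> linarith
    rw [Measure.smul_apply, Measure.dirac_apply' _ measurableSet_Ioo,
      Set.indicator_of_mem hmem, smul_eq_mul]
    simp only [Pi.one_apply, mul_one]
    exact ne_of_gt (tsub_pos_of_lt (hkey ε hε))
  · have h2 : ENNReal.ofReal (1 - c) • lam = ν := by
      rw [hlam, smul_smul, ENNReal.mul_inv_cancel hl0 hltop, one_smul]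
    rw [h2, hν, add_comm]
    exact (Measure.sub_add_cancel_of_le hle).symm
end

section
/- Let c ∈ [1/2, 1), x̄ ∈ ℝ, and λ a Borel probability measure on ℝ with x̄ ∈ supp λ. Define ρ = c·δ_{x̄} + (1-c)·λ. Then for every r > 0 the essential supremum over x ∈ ℝ (with respect to Lebesgue measure) of ρ((x-r/2, x+r/2)) is strictly greater than c. -/
open MeasureTheory

/-- If `ρ = c·δ_x̄ + (1-c)·λ` with `1/2 ≤ c < 1` and `x̄ ∈ supp λ`, then for every
`r > 0` the essential supremum of `x ↦ ρ((x - r/2, x + r/2))` is strictly greater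
than `c`. -/
theorem essSup_gt_of_decomposition (c : ℝ) (hc : 1 / 2 ≤ c) (hc1 : c < 1)
    (xbar : ℝ) (lam : Measure ℝ) [IsProbabilityMeasure lam] (hx : xbar ∈ msupp lam)
    (ρ : Measure ℝ)
    (hρ : ρ = ENNReal.ofReal c • Measure.dirac xbar + ENNReal.ofReal (1 - c) • lam) :
    ∀ r > (0 : ℝ),
      ENNReal.ofReal c < essSup (fun x => ρ (Set.Ioo (x - r / 2) (x + r / 2))) volume := by
  intro r hr
  by_contra h
  push_neg at h
  set f : ℝ → ENNReal := fun x => ρ (Set.Ioo (x - r / 2) (x + r / 2)) with hf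
  have hae : ∀ᵐ x ∂(volume : Measure ℝ), f x ≤ ENNReal.ofReal c :=
    (ae_le_essSup (f := f)).mono fun x hx => hx.trans h
  -- the bad set is null
  have hnull : (volume : Measure ℝ) {x | ¬ f x ≤ ENNReal.ofReal c} = 0 := hae
  set S : Set ℝ := Set.Ioo (xbar - r / 4) (xbar + r / 4) with hS
  have hSpos : 0 < (volume : Measure ℝ) S := by
    rw [hS, Real.volume_Ioo]
    have : (0:ℝ) < (xbar + r / 4) - (xbar - r / 4) := by linarith
    simpa using ENNReal.ofReal_pos.mpr this
  have hSgood : 0 < (volume : Measure ℝ) (S ∩ {x | f x ≤ ENNReal.ofReal c}) := by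
    by_contra hz
    push_neg at hz
    have hz0 : (volume : Measure ℝ) (S ∩ {x | f x ≤ ENNReal.ofReal c}) = 0 :=
      le_antisymm hz zero_le
    have : (volume : Measure ℝ) S ≤
        (volume : Measure ℝ) (S ∩ {x | f x ≤ ENNReal.ofReal c}) +
        (volume : Measure ℝ) {x | ¬ f x ≤ ENNReal.ofReal c} := by
      refine (measure_mono ?_).trans (measure_union_le _ _)
      intro x hxS
      by_cases hfx : f x ≤ ENNReal.ofReal c
      · exact Or.inl ⟨hxS, hfx⟩
      · exact Or.inr hfx
    rw [hz0, hnull, add_zero] at this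
    exact absurd (le_antisymm this zero_le) hSpos.ne'
  obtain ⟨x, hxS, hxf⟩ := MeasureTheory.nonempty_of_measure_ne_zero hSgood.ne'
  -- now derive a contradiction: f x > c
  obtain ⟨hx1, hx2⟩ := hxS
  have hsub : S ⊆ Set.Ioo (x - r / 2) (x + r / 2) := by
    intro y hy
    obtain ⟨hy1, hy2⟩ := hy
    constructor <;> simp only [hS] at * <;> linarith
  have hxbar_mem : xbar ∈ Set.Ioo (x - r / 2) (x + r / 2) := by
    constructor <;> linarith
  have hlam : 0 < lam S := hx (r / 4) (by linarith)
  have hfx_ge : ENNReal.ofReal c + ENNReal.ofReal (1 - c) * lam S ≤ f x := by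
    rw [hf]
    simp only [hρ, Measure.add_apply, Measure.smul_apply, smul_eq_mul]
    refine add_le_add ?_ (mul_le_mul_right (measure_mono hsub) _)
    rw [Measure.dirac_apply' _ measurableSet_Ioo]
    simp [hxbar_mem]
  have hne : ENNReal.ofReal (1 - c) * lam S ≠ 0 := by
    apply mul_ne_zero
    · simpa using ENNReal.ofReal_pos.mpr (by linarith : (0:ℝ) < 1 - c) |>.ne'
    · exact hlam.ne'
  have : ENNReal.ofReal c < f x :=
    lt_of_lt_of_le (ENNReal.lt_add_right ENNReal.ofReal_ne_top hne) hfx_ge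
  exact absurd hxf (not_le.mpr this)
end

section
/- Let ρ be a Borel probability measure on ℝ and r > 0. The set { x ∈ ℝ : ρ((x-r/2, x+r/2)) = 1 } has positive Lebesgue measure if and only if diam(supp ρ) < r. -/
open MeasureTheory
open scoped ENNReal

lemma msupp_compl_null (ρ : Measure ℝ) : ρ (msupp ρ)ᶜ = 0 := by
  apply measure_null_of_locally_null
  intro x hx
  simp only [msupp, Set.mem_compl_iff, Set.mem_setOf_eq, not_forall, not_lt, exists_prop]
    at hx
  obtain ⟨ε, hε, h0⟩ := hx
  refine ⟨Set.Ioo (x - ε) (x + ε), ?_, le_antisymm h0 zero_le⟩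
  exact mem_nhdsWithin_of_mem_nhds (Ioo_mem_nhds (by linarith) (by linarith))

/-- The set `{ x : ρ((x - r/2, x + r/2)) = 1 }` has positive Lebesgue measure if and
only if `diam (supp ρ) < r`. -/
theorem pos_measure_iff_diam_support_lt (ρ : Measure ℝ) [IsProbabilityMeasure ρ]
    (r : ℝ) (hr : 0 < r) :
    0 < volume {x : ℝ | ρ (Set.Ioo (x - r / 2) (x + r / 2)) = 1} ↔
      EMetric.diam (msupp ρ) < ENNReal.ofReal r := by
  set S := msupp ρ with hS
  set A := {x : ℝ | ρ (Set.Ioo (x - r / 2) (x + r / 2)) = 1} with hA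
  have hScompl : ρ Sᶜ = 0 := msupp_compl_null ρ
  have hSne : S.Nonempty := by
    by_contra h
    rw [Set.not_nonempty_iff_eq_empty] at h
    have h1 : ρ Set.univ = 0 := by
      rw [← Set.compl_empty, ← h]; exact hScompl
    simp [measure_univ] at h1
  have key : ∀ x : ℝ, x ∈ A → S ⊆ Set.Icc (x - r / 2) (x + r / 2) := by
    intro x hx s hs
    have hcompl : ρ (Set.Ioo (x - r / 2) (x + r / 2))ᶜ = 0 := by
      have := measure_add_measure_compl (μ := ρ)
        (measurableSet_Ioo (a := x - r / 2) (b := x + r / 2))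
      rw [hx, measure_univ] at this
      have h2 : (1 : ℝ≥0∞) + ρ (Set.Ioo (x - r / 2) (x + r / 2))ᶜ = 1 + 0 := by
        rw [add_zero]; exact this
      exact (ENNReal.add_right_inj ENNReal.one_ne_top).mp h2
    constructor
    · by_contra h
      push_neg at h
      have hpos := hs (x - r / 2 - s) (by linarith)
      have hsub : Set.Ioo (s - (x - r / 2 - s)) (s + (x - r / 2 - s)) ⊆
          (Set.Ioo (x - r / 2) (x + r / 2))ᶜ := by
        intro t ht
        simp only [Set.mem_Ioo] at ht
        simp only [Set.mem_compl_iff, Set.mem_Ioo, not_and, not_lt]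
        intro _
        linarith [ht.2]
      exact absurd (measure_mono_null hsub hcompl) hpos.ne'
    · by_contra h
      push_neg at h
      have hpos := hs (s - (x + r / 2)) (by linarith)
      have hsub : Set.Ioo (s - (s - (x + r / 2))) (s + (s - (x + r / 2))) ⊆
          (Set.Ioo (x - r / 2) (x + r / 2))ᶜ := by
        intro t ht
        simp only [Set.mem_Ioo] at ht
        simp only [Set.mem_compl_iff, Set.mem_Ioo, not_and, not_lt]
        intro h1
        linarith [ht.1]
      exact absurd (measure_mono_null hsub hcompl) hpos.ne'
  constructor
  · intro hvol
    obtain ⟨x, hx, y, hy, hxy⟩ : ∃ x ∈ A, ∃ y ∈ A, x < y := by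
      by_contra h
      push_neg at h
      have hsub : A.Subsingleton := by
        intro a ha b hb
        exact le_antisymm (h b hb a ha) (h a ha b hb)
      exact hvol.ne' (hsub.measure_zero volume)
    have hsubS : S ⊆ Set.Icc (y - r / 2) (x + r / 2) := by
      intro s hs
      exact ⟨(key y hy hs).1, (key x hx hs).2⟩
    calc EMetric.diam S ≤ EMetric.diam (Set.Icc (y - r / 2) (x + r / 2)) :=
          EMetric.diam_mono hsubS
      _ = ENNReal.ofReal (x + r / 2 - (y - r / 2)) := Real.ediam_Icc _ _
      _ < ENNReal.ofReal r := by
          rw [ENNReal.ofReal_lt_ofReal_iff hr]; linarith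
  · intro hdiam
    have hbdd : Bornology.IsBounded S := by
      rw [Metric.isBounded_iff_ediam_ne_top]
      exact (hdiam.trans_le le_top).ne
    set m := sInf S with hm
    set M := sSup S with hM
    have hMm : M - m < r := by
      have h1 : EMetric.diam S = ENNReal.ofReal (M - m) := Real.ediam_eq hbdd
      rw [h1, ENNReal.ofReal_lt_ofReal_iff hr] at hdiam
      exact hdiam
    have hsub : Set.Ioo (M - r / 2) (m + r / 2) ⊆ A := by
      intro x hx
      simp only [Set.mem_Ioo] at hx
      show ρ (Set.Ioo (x - r / 2) (x + r / 2)) = 1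
      have hcompl : (Set.Ioo (x - r / 2) (x + r / 2))ᶜ ⊆ Sᶜ := by
        intro t ht hts
        apply ht
        have h1 : m ≤ t := csInf_le hbdd.bddBelow hts
        have h2 : t ≤ M := le_csSup hbdd.bddAbove hts
        exact ⟨by linarith [hx.2], by linarith [hx.1]⟩
      have h0 : ρ (Set.Ioo (x - r / 2) (x + r / 2))ᶜ = 0 :=
        measure_mono_null hcompl hScompl
      have := measure_add_measure_compl (μ := ρ)
        (measurableSet_Ioo (a := x - r / 2) (b := x + r / 2))
      rw [h0, add_zero, measure_univ] at this
      exact this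
    have hmM : m ≤ M := Real.sInf_le_sSup S hbdd.bddBelow hbdd.bddAbove
    calc (0 : ℝ≥0∞) < ENNReal.ofReal (m + r / 2 - (M - r / 2)) := by
          rw [ENNReal.ofReal_pos]; linarith
      _ = volume (Set.Ioo (M - r / 2) (m + r / 2)) := (Real.volume_Ioo).symm
      _ ≤ volume A := measure_mono hsub
end

section
/- Let φ ∈ L²(ℝ) be a unit vector and ν a Borel probability measure on ℝ. Define T = ∫ V_x* P_φ V_x dν(x), where (V_x ψ)(y) = e^{ixy} ψ(y) and P_φ is the orthogonal projection onto ℂφ. If T is a projection, then ν is a Dirac measure. -/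
open MeasureTheory
open scoped InnerProductSpace Real

noncomputable section

namespace DiracProjAux

abbrev H := Lp ℂ 2 (volume : Measure ℝ)

lemma norm_exp_eq_one (x y : ℝ) : ‖Complex.exp (Complex.I * x * y)‖ = 1 := by
  simp [Complex.norm_exp]

lemma normV (V : ℝ → (H →L[ℂ] H))
    (hV : ∀ x, ∀ ψ : H, (V x ψ : ℝ → ℂ) =ᵐ[volume]
      fun y => Complex.exp (Complex.I * x * y) * (ψ : ℝ → ℂ) y)
    (x : ℝ) (ψ : H) : ‖V x ψ‖ = ‖ψ‖ := by
  rw [Lp.norm_def, Lp.norm_def]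
  congr 1
  rw [eLpNorm_congr_ae (hV x ψ)]
  apply eLpNorm_congr_norm_ae
  filter_upwards with y
  rw [norm_mul, norm_exp_eq_one, one_mul]

lemma inner_eq (V : ℝ → (H →L[ℂ] H))
    (hV : ∀ x, ∀ ψ : H, (V x ψ : ℝ → ℂ) =ᵐ[volume]
      fun y => Complex.exp (Complex.I * x * y) * (ψ : ℝ → ℂ) y)
    (φ ψ : H) (x : ℝ) :
    ⟪φ, V x ψ⟫_ℂ = ∫ y : ℝ, (starRingEnd ℂ) ((φ : ℝ → ℂ) y)
      * (Complex.exp (Complex.I * x * y) * (ψ : ℝ → ℂ) y) := by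
  rw [L2.inner_def]
  refine integral_congr_ae ?_
  filter_upwards [hV x ψ] with y hy
  rw [RCLike.inner_apply, hy, mul_comm]

lemma continuous_inner (V : ℝ → (H →L[ℂ] H))
    (hV : ∀ x, ∀ ψ : H, (V x ψ : ℝ → ℂ) =ᵐ[volume]
      fun y => Complex.exp (Complex.I * x * y) * (ψ : ℝ → ℂ) y)
    (φ ψ : H) : Continuous fun x : ℝ => ⟪φ, V x ψ⟫_ℂ := by
  have : (fun x : ℝ => ⟪φ, V x ψ⟫_ℂ) = fun x : ℝ => ∫ y : ℝ,
      (starRingEnd ℂ) ((φ : ℝ → ℂ) y) * (Complex.exp (Complex.I * x * y) * (ψ : ℝ → ℂ) y) := by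
    funext x; exact inner_eq V hV φ ψ x
  rw [this]
  apply continuous_of_dominated (bound := fun y => ‖(φ : ℝ → ℂ) y‖ * ‖(ψ : ℝ → ℂ) y‖)
  · intro x
    apply AEStronglyMeasurable.mul
    · exact (RCLike.continuous_conj.comp_aestronglyMeasurable (Lp.aestronglyMeasurable φ))
    · exact (Complex.continuous_exp.comp (by fun_prop)).aestronglyMeasurable.mul
        (Lp.aestronglyMeasurable ψ)
  · intro x
    filter_upwards with y
    rw [norm_mul, norm_mul, norm_exp_eq_one, one_mul, RCLike.norm_conj]
  · have h := (L2.integrable_inner (𝕜 := ℂ) φ ψ).norm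
    apply h.congr
    filter_upwards with y
    rw [RCLike.inner_apply, norm_mul, RCLike.norm_conj, mul_comm]
  · filter_upwards with y
    fun_prop

lemma countable_sol {x₁ x₂ : ℝ} (hne : x₁ ≠ x₂) {c₁ c₂ : ℂ} (hc₂ : c₂ ≠ 0) :
    Set.Countable {y : ℝ | Complex.exp (Complex.I * x₁ * y) * c₂
      = Complex.exp (Complex.I * x₂ * y) * c₁} := by
  set B := {y : ℝ | Complex.exp (Complex.I * x₁ * y) * c₂ = Complex.exp (Complex.I * x₂ * y) * c₁}
    with hB
  rcases Set.eq_empty_or_nonempty B with h | ⟨y₀, hy₀⟩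
  · simp [h]
  · apply Set.Countable.mono ?_ (Set.countable_range fun n : ℤ => y₀ + n * (2 * π) / (x₁ - x₂))
    intro y hy
    have hy' : Complex.exp (Complex.I * x₁ * y) * c₂ = Complex.exp (Complex.I * x₂ * y) * c₁ := hy
    have hy₀' : Complex.exp (Complex.I * x₁ * y₀) * c₂ = Complex.exp (Complex.I * x₂ * y₀) * c₁ :=
      hy₀
    have key2 : Complex.exp (Complex.I * x₁ * y) * Complex.exp (Complex.I * x₂ * y₀) * c₂
        = Complex.exp (Complex.I * x₂ * y) * Complex.exp (Complex.I * x₁ * y₀) * c₂ := by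
      linear_combination Complex.exp (Complex.I * x₂ * y₀) * hy'
        - Complex.exp (Complex.I * x₂ * y) * hy₀'
    have key : Complex.exp (Complex.I * x₁ * y + Complex.I * x₂ * y₀)
        = Complex.exp (Complex.I * x₂ * y + Complex.I * x₁ * y₀) := by
      rw [Complex.exp_add, Complex.exp_add]
      exact mul_right_cancel₀ hc₂ key2
    obtain ⟨n, hn⟩ := Complex.exp_eq_exp_iff_exists_int.mp key
    have him := congrArg Complex.im hn
    simp [Complex.add_im, Complex.mul_im, Complex.mul_re] at him
    refine ⟨n, ?_⟩
    have hsub : x₁ - x₂ ≠ 0 := sub_ne_zero.mpr hne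
    field_simp
    ring_nf
    ring_nf at him
    nlinarith [him]

lemma subsingleton_parallel (V : ℝ → (H →L[ℂ] H))
    (hV : ∀ x, ∀ ψ : H, (V x ψ : ℝ → ℂ) =ᵐ[volume]
      fun y => Complex.exp (Complex.I * x * y) * (ψ : ℝ → ℂ) y)
    (φ ψ : H) (hφ : φ ≠ 0) :
    {x : ℝ | ∃ c : ℂ, c ≠ 0 ∧ V x ψ = c • φ}.Subsingleton := by
  intro x₁ h₁ x₂ h₂
  by_contra hne
  obtain ⟨c₁, hc₁, e₁⟩ := h₁
  obtain ⟨c₂, hc₂, e₂⟩ := h₂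
  have he₁ : (V x₁ ψ : ℝ → ℂ) =ᵐ[volume] fun y => c₁ * (φ : ℝ → ℂ) y := by
    rw [e₁]; filter_upwards [Lp.coeFn_smul c₁ φ] with y hy; simpa using hy
  have he₂ : (V x₂ ψ : ℝ → ℂ) =ᵐ[volume] fun y => c₂ * (φ : ℝ → ℂ) y := by
    rw [e₂]; filter_upwards [Lp.coeFn_smul c₂ φ] with y hy; simpa using hy
  have hB : volume {y : ℝ | Complex.exp (Complex.I * x₁ * y) * c₂
      = Complex.exp (Complex.I * x₂ * y) * c₁} = 0 :=
    (countable_sol hne hc₂).measure_zero _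
  have hzero : (φ : ℝ → ℂ) =ᵐ[volume] 0 := by
    filter_upwards [(hV x₁ ψ).symm.trans he₁, (hV x₂ ψ).symm.trans he₂,
      measure_eq_zero_iff_ae_notMem.mp hB] with y hy₁ hy₂ hyB
    -- hy₁ : exp(I x₁ y) * ψ y = c₁ * φ y, hy₂ : exp(I x₂ y) * ψ y = c₂ * φ y
    have hψy : (ψ : ℝ → ℂ) y = 0 := by
      by_contra hψ
      apply hyB
      show Complex.exp (Complex.I * x₁ * y) * c₂ = Complex.exp (Complex.I * x₂ * y) * c₁
      have : Complex.exp (Complex.I * x₁ * y) * c₂ * (ψ : ℝ → ℂ) y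
          = Complex.exp (Complex.I * x₂ * y) * c₁ * (ψ : ℝ → ℂ) y := by
        linear_combination c₂ * hy₁ - c₁ * hy₂
      exact mul_right_cancel₀ hψ this
    have : c₁ * (φ : ℝ → ℂ) y = 0 := by rw [← hy₁, hψy, mul_zero]
    simpa [hc₁] using this
  exact hφ (SetLike.coe_eq_coe.mp (AEEqFun.ext (hzero.trans (Lp.coeFn_zero ℂ 2 _).symm)))

end DiracProjAux

end

open DiracProjAux

set_option maxHeartbeats 2000000 in
/-- Let `φ ∈ L²(ℝ)` be a unit vector, `ν` a Borel probability measure, `V x` the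
multiplication by `e^{ixy}`, and `T = ∫ V_x* P_φ V_x dν(x)` (defined weakly by
`⟪ψ, Tψ⟫ = ∫ |⟪φ, V_x ψ⟫|² dν(x)`).  If `T` is a projection, then `ν` is a Dirac
measure. -/
theorem dirac_of_projection
    (φ : Lp ℂ 2 (volume : Measure ℝ)) (hφ : ‖φ‖ = 1)
    (ν : Measure ℝ) [IsProbabilityMeasure ν]
    (V : ℝ → (Lp ℂ 2 (volume : Measure ℝ) →L[ℂ] Lp ℂ 2 (volume : Measure ℝ)))
    (hV : ∀ x, ∀ ψ : Lp ℂ 2 (volume : Measure ℝ),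
      (V x ψ : ℝ → ℂ) =ᵐ[volume] fun y => Complex.exp (Complex.I * x * y) * (ψ : ℝ → ℂ) y)
    (T : Lp ℂ 2 (volume : Measure ℝ) →L[ℂ] Lp ℂ 2 (volume : Measure ℝ))
    (hT : ∀ ψ : Lp ℂ 2 (volume : Measure ℝ),
      ⟪ψ, T ψ⟫_ℂ = ∫ x, (‖⟪φ, V x ψ⟫_ℂ‖ ^ 2 : ℂ) ∂ν)
    (hself : IsSelfAdjoint T) (hproj : T ∘L T = T) :
    ∃ x₀ : ℝ, ν = Measure.dirac x₀ := by
  have hφ0 : φ ≠ 0 := fun h => by simp [h] at hφ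
  -- rewrite the weak identity with real integrals
  have hT' : ∀ ψ : H, ⟪ψ, T ψ⟫_ℂ = ((∫ x, ‖⟪φ, V x ψ⟫_ℂ‖ ^ 2 ∂ν : ℝ) : ℂ) := by
    intro ψ
    rw [hT ψ]
    simp_rw [← Complex.ofReal_pow]
    exact integral_ofReal
  -- a point all of whose neighborhoods have positive measure
  have hνu : ν Set.univ ≠ 0 := by simp
  obtain ⟨x₀, -, hx₀⟩ := exists_mem_forall_mem_nhdsWithin_pos_measure hνu
  rw [nhdsWithin_univ] at hx₀
  -- the modulated vector ψ₀ with V x₀ ψ₀ = φ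
  have hmem : MemLp (fun y : ℝ => Complex.exp (Complex.I * (-x₀) * y) * (φ : ℝ → ℂ) y) 2
      volume := by
    refine MemLp.of_le (Lp.memLp φ) ?_ (ae_of_all _ fun y => ?_)
    · exact ((Complex.continuous_exp.comp (by fun_prop)).aestronglyMeasurable.mul
        (Lp.aestronglyMeasurable φ))
    · simp [Complex.norm_exp]
  set ψ₀ : H := hmem.toLp _ with hψ₀def
  have hVψ₀ : V x₀ ψ₀ = φ := by
    apply SetLike.coe_eq_coe.mp
    apply AEEqFun.ext
    filter_upwards [hV x₀ ψ₀, hmem.coeFn_toLp] with y h1 h2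
    rw [h1, ← hψ₀def] at *
    rw [h2, ← mul_assoc, ← Complex.exp_add]
    norm_num
  -- T ψ₀ ≠ 0
  have hg₀cont : Continuous fun x : ℝ => ‖⟪φ, V x ψ₀⟫_ℂ‖ ^ 2 :=
    ((continuous_inner V hV φ ψ₀).norm).pow 2
  have hU : IsOpen {x : ℝ | 1 / 2 < ‖⟪φ, V x ψ₀⟫_ℂ‖ ^ 2} :=
    isOpen_lt continuous_const hg₀cont
  have hx₀U : x₀ ∈ {x : ℝ | 1 / 2 < ‖⟪φ, V x ψ₀⟫_ℂ‖ ^ 2} := by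
    simp only [Set.mem_setOf_eq, hVψ₀]
    rw [inner_self_eq_norm_sq_to_K (𝕜 := ℂ)]
    norm_cast
    rw [hφ]
    norm_num
  have hUpos : 0 < ν {x : ℝ | 1 / 2 < ‖⟪φ, V x ψ₀⟫_ℂ‖ ^ 2} :=
    hx₀ _ (hU.mem_nhds hx₀U)
  have hTψ₀ : T ψ₀ ≠ 0 := by
    intro h
    have h0 : (0 : ℂ) = ((∫ x, ‖⟪φ, V x ψ₀⟫_ℂ‖ ^ 2 ∂ν : ℝ) : ℂ) := by
      rw [← hT' ψ₀, h, inner_zero_right]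
    have h0' : ∫ x, ‖⟪φ, V x ψ₀⟫_ℂ‖ ^ 2 ∂ν = 0 := by exact_mod_cast h0.symm
    have hint : Integrable (fun x => ‖⟪φ, V x ψ₀⟫_ℂ‖ ^ 2) ν := by
      refine Integrable.mono' (integrable_const (‖ψ₀‖ ^ 2)) hg₀cont.aestronglyMeasurable
        (ae_of_all _ fun x => ?_)
      rw [Real.norm_eq_abs, abs_of_nonneg (by positivity)]
      calc ‖⟪φ, V x ψ₀⟫_ℂ‖ ^ 2 ≤ (‖φ‖ * ‖V x ψ₀‖) ^ 2 := by
            gcongr; exact norm_inner_le_norm _ _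
        _ = ‖ψ₀‖ ^ 2 := by rw [normV V hV, hφ, one_mul]
    have hae := (integral_eq_zero_iff_of_nonneg_ae
      (ae_of_all _ fun x => by positivity) hint).mp h0'
    have hzero : ν {x : ℝ | ¬ ‖⟪φ, V x ψ₀⟫_ℂ‖ ^ 2 = 0} = 0 := by
      simpa using ae_iff.mp hae
    have : ν {x : ℝ | 1 / 2 < ‖⟪φ, V x ψ₀⟫_ℂ‖ ^ 2} = 0 := by
      refine measure_mono_null (fun z hz => ?_) hzero
      show ¬ ‖⟪φ, V z ψ₀⟫_ℂ‖ ^ 2 = 0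
      intro h'
      simp only [Set.mem_setOf_eq, h'] at hz
      norm_num at hz
    exact absurd this hUpos.ne'
  -- normalized eigenvector ψ of T
  set ψ₁ : H := T ψ₀ with hψ₁def
  have hψ₁fix : T ψ₁ = ψ₁ := by
    have := DFunLike.congr_fun hproj ψ₀
    simpa [ContinuousLinearMap.comp_apply] using this
  have hψ₁norm : ‖ψ₁‖ ≠ 0 := norm_ne_zero_iff.mpr hTψ₀
  set ψ : H := ((‖ψ₁‖⁻¹ : ℝ) : ℂ) • ψ₁ with hψdef
  have hψnorm : ‖ψ‖ = 1 := by
    rw [hψdef, norm_smul]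
    simp [abs_of_nonneg (inv_nonneg.mpr (norm_nonneg ψ₁))]
    field_simp
  have hψfix : T ψ = ψ := by
    rw [hψdef, _root_.map_smul, hψ₁fix]
  -- the integral identity for ψ
  have hone : ∫ x, ‖⟪φ, V x ψ⟫_ℂ‖ ^ 2 ∂ν = 1 := by
    have h2 : ((∫ x, ‖⟪φ, V x ψ⟫_ℂ‖ ^ 2 ∂ν : ℝ) : ℂ) = 1 := by
      rw [← hT' ψ, hψfix, inner_self_eq_norm_sq_to_K (𝕜 := ℂ), hψnorm]
      norm_num
    exact_mod_cast h2
  -- the integrand is bounded by 1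
  have hb : ∀ x, ‖⟪φ, V x ψ⟫_ℂ‖ ≤ 1 := fun x => by
    calc ‖⟪φ, V x ψ⟫_ℂ‖ ≤ ‖φ‖ * ‖V x ψ‖ := norm_inner_le_norm _ _
      _ = 1 := by rw [normV V hV, hφ, hψnorm, one_mul]
  have hcont : Continuous fun x : ℝ => ‖⟪φ, V x ψ⟫_ℂ‖ ^ 2 :=
    ((continuous_inner V hV φ ψ).norm).pow 2
  have hint : Integrable (fun x => ‖⟪φ, V x ψ⟫_ℂ‖ ^ 2) ν := by
    refine Integrable.mono' (integrable_const 1) hcont.aestronglyMeasurable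
      (ae_of_all _ fun x => ?_)
    rw [Real.norm_eq_abs, abs_of_nonneg (by positivity)]
    nlinarith [hb x, norm_nonneg (⟪φ, V x ψ⟫_ℂ)]
  -- hence ‖⟪φ, V x ψ⟫‖ = 1 a.e.
  have hsub : ∫ x, (1 - ‖⟪φ, V x ψ⟫_ℂ‖ ^ 2) ∂ν = 0 := by
    rw [integral_sub (integrable_const 1) hint, hone, integral_const]
    simp
  have haeone : ∀ᵐ x ∂ν, ‖⟪φ, V x ψ⟫_ℂ‖ = 1 := by
    have hae := (integral_eq_zero_iff_of_nonneg_ae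
      (f := fun x => 1 - ‖⟪φ, V x ψ⟫_ℂ‖ ^ 2)
      (ae_of_all _ fun x => by
        have h1 := hb x
        have h2 := norm_nonneg (⟪φ, V x ψ⟫_ℂ)
        simp only [Pi.zero_apply]
        nlinarith) ((integrable_const (1:ℝ)).sub hint)).mp hsub
    filter_upwards [hae] with x hx
    simp only [Pi.zero_apply] at hx
    have hnn := norm_nonneg (⟪φ, V x ψ⟫_ℂ)
    nlinarith
  -- a.e. x, V x ψ is parallel to φ
  set S : Set ℝ := {x : ℝ | ∃ c : ℂ, c ≠ 0 ∧ V x ψ = c • φ} with hSdef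
  have haeS : ∀ᵐ x ∂ν, x ∈ S := by
    filter_upwards [haeone] with x hx
    have hVne : V x ψ ≠ 0 := by
      intro h
      rw [h, inner_zero_right] at hx
      norm_num at hx
    have : ‖⟪φ, V x ψ⟫_ℂ‖ = ‖φ‖ * ‖V x ψ‖ := by
      rw [hx, normV V hV, hφ, hψnorm, one_mul]
    exact (norm_inner_eq_norm_iff hφ0 hVne).mp this
  have hSsub : S.Subsingleton := subsingleton_parallel V hV φ ψ hφ0
  have hSm : MeasurableSet S := hSsub.countable.measurableSet
  have hScompl : ν Sᶜ = 0 := by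
    exact ae_iff.mp haeS
  have hS1 : ν S = 1 := (prob_compl_eq_zero_iff hSm).mp hScompl
  have hSne : S.Nonempty := by
    rcases Set.eq_empty_or_nonempty S with h | h
    · rw [h] at hS1; simp at hS1
    · exact h
  obtain ⟨xs, hxs⟩ := hSne
  have hSsingle : S ⊆ {xs} := fun z hz => hSsub hz hxs
  have hxscompl : ν {xs}ᶜ = 0 :=
    measure_mono_null (Set.compl_subset_compl.mpr hSsingle) hScompl
  refine ⟨xs, Measure.ext fun s hs => ?_⟩
  rw [Measure.dirac_apply' _ hs]
  by_cases hxselt : xs ∈ s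
  · rw [Set.indicator_of_mem hxselt]
    have : ν sᶜ = 0 :=
      measure_mono_null (Set.compl_subset_compl.mpr (Set.singleton_subset_iff.mpr hxselt))
        hxscompl
    simpa using (prob_compl_eq_zero_iff hs).mp this
  · rw [Set.indicator_of_notMem hxselt]
    refine measure_mono_null (fun z hz => ?_) hxscompl
    intro h
    rw [Set.mem_singleton_iff] at h
    subst h
    exact hxselt hz
end
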